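/- Let x₁, x₂ ∈ ℝ², let L be a 1-dimensional linear subspace of ℝ², let r > 0 and α₀ ∈ (0, π/50). Suppose |x₁ - x₂| ≤ sin(α₀)·r. Then the twice-truncated cone K(x₁, L, α₀, sin(α₀)⁻¹|x₁-x₂|, r) is contained in the cone K(x₂, L, 8α₀, 2r). -/
import Mathlib


open Real Metric Set

noncomputable def cone (x : EuclideanSpace ℝ (Fin 2))
    (L : Submodule ℝ (EuclideanSpace ℝ (Fin 2))) (α : ℝ) :
    Set (EuclideanSpace ℝ (Fin 2)) :=
  {y | Metric.infDist y ((fun v => v + x) '' (L : Set (EuclideanSpace ℝ (Fin 2))))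
        < Real.sin α * ‖y - x‖}

/-- Twice truncated cone `K(x, L, α, r, R)`. -/
noncomputable def coneTT (x : EuclideanSpace ℝ (Fin 2))
    (L : Submodule ℝ (EuclideanSpace ℝ (Fin 2))) (α r R : ℝ) :
    Set (EuclideanSpace ℝ (Fin 2)) :=
  (cone x L α ∩ Metric.ball x R) \ Metric.ball x r

lemma infDist_shift (y x : EuclideanSpace ℝ (Fin 2))
    (S : Set (EuclideanSpace ℝ (Fin 2))) :
    Metric.infDist y ((fun v => v + x) '' S) = Metric.infDist (y - x) S := by
  have hiso : Isometry (fun v : EuclideanSpace ℝ (Fin 2) => v + x) :=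
    Isometry.of_dist_eq (fun a b => by simp [dist_eq_norm])
  have := Metric.infDist_image (x := y - x) (t := S) hiso
  simpa using this

theorem stmt0 (x₁ x₂ : EuclideanSpace ℝ (Fin 2))
    (L : Submodule ℝ (EuclideanSpace ℝ (Fin 2))) (hL : Module.finrank ℝ L = 1)
    (r α₀ : ℝ) (hr : 0 < r) (hα₀ : α₀ ∈ Set.Ioo 0 (π / 50))
    (hx : ‖x₁ - x₂‖ ≤ Real.sin α₀ * r) :
    coneTT x₁ L α₀ ((Real.sin α₀)⁻¹ * ‖x₁ - x₂‖) r ⊆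
      cone x₂ L (8 * α₀) ∩ Metric.ball x₂ (2 * r) := by
  obtain ⟨hα₀0, hα₀1⟩ := hα₀
  have hπ : π < 3.15 := by linarith [Real.pi_lt_d2]
  have hs0 : 0 < Real.sin α₀ := Real.sin_pos_of_pos_of_lt_pi hα₀0 (by nlinarith)
  have hsle : Real.sin α₀ ≤ α₀ := Real.sin_le hα₀0.le
  have hs7 : Real.sin α₀ ≤ 0.07 := by nlinarith
  set s := Real.sin α₀ with hsdef
  -- key trig inequality
  have h38 : Real.sin (3 * α₀) ≤ Real.sin (8 * α₀) := by
    apply Real.sin_le_sin_of_le_of_le_pi_div_two (by nlinarith) (by nlinarith) (by nlinarith)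
  have h3 : Real.sin (3 * α₀) = 3 * s - 4 * s ^ 3 := Real.sin_three_mul α₀
  have hA : 2 ≤ (3 - 4 * s ^ 2) * (1 - s) := by nlinarith
  have hkey : 2 * s ≤ Real.sin (8 * α₀) * (1 - s) := by nlinarith
  have h8nn : 0 ≤ Real.sin (8 * α₀) := by nlinarith
  intro y hy
  obtain ⟨⟨hc, hb⟩, hfar⟩ := hy
  rw [Metric.mem_ball, dist_eq_norm] at hb
  rw [Metric.mem_ball, dist_eq_norm, not_lt] at hfar
  set d := ‖x₁ - x₂‖ with hddef
  set n := ‖y - x₁‖ with hndef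
  have hdn : d ≤ s * n := by
    have := hfar
    rw [inv_mul_le_iff₀ hs0] at this
    linarith [this]
  have hc1 : Metric.infDist (y - x₁) (L : Set (EuclideanSpace ℝ (Fin 2))) < s * n := by
    rw [← infDist_shift]; exact hc
  have hn0 : 0 < n := by
    by_contra h
    push_neg at h
    have : (0:ℝ) ≤ Metric.infDist (y - x₁) (L : Set (EuclideanSpace ℝ (Fin 2))) :=
      Metric.infDist_nonneg
    nlinarith
  have htri : ‖y - x₂‖ ≥ n - d := by
    have : ‖y - x₁‖ - ‖y - x₂‖ ≤ ‖(y - x₁) - (y - x₂)‖ := norm_sub_norm_le _ _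
    have he : (y - x₁) - (y - x₂) = x₂ - x₁ := by abel
    rw [he] at this
    have hrev : ‖x₂ - x₁‖ = d := norm_sub_rev _ _
    linarith
  have htri2 : ‖y - x₂‖ ≤ n + d := by
    have : ‖(y - x₁) + (x₁ - x₂)‖ ≤ ‖y - x₁‖ + ‖x₁ - x₂‖ := norm_add_le _ _
    have he : (y - x₁) + (x₁ - x₂) = y - x₂ := by abel
    rw [he] at this
    linarith
  constructor
  · -- cone membership
    show Metric.infDist y _ < _
    rw [infDist_shift]
    have hshift : Metric.infDist (y - x₂) (L : Set (EuclideanSpace ℝ (Fin 2))) ≤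
        Metric.infDist (y - x₁) (L : Set (EuclideanSpace ℝ (Fin 2))) +
          dist (y - x₂) (y - x₁) := Metric.infDist_le_infDist_add_dist
    have hdd : dist (y - x₂) (y - x₁) = d := by
      rw [dist_eq_norm]
      congr 1
      abel
    rw [hdd] at hshift
    have h1 : Metric.infDist (y - x₂) (L : Set (EuclideanSpace ℝ (Fin 2))) < 2 * s * n := by
      linarith
    have h2 : 2 * s * n ≤ Real.sin (8 * α₀) * ((1 - s) * n) := by
      rw [← mul_assoc]
      exact mul_le_mul_of_nonneg_right hkey hn0.le
    have h3' : (1 - s) * n ≤ ‖y - x₂‖ := by nlinarith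
    have h4 : Real.sin (8 * α₀) * ((1 - s) * n) ≤ Real.sin (8 * α₀) * ‖y - x₂‖ :=
      mul_le_mul_of_nonneg_left h3' h8nn
    linarith
  · -- ball membership
    rw [Metric.mem_ball, dist_eq_norm]
    have hdr : d ≤ s * r := hx
    have hsr : s * r < r := by nlinarith
    linarith
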